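/- Let (D, g, h) be a Czech hat game with a directionless leaf ℓ whose unique neighbor is u. If h ℓ > g ℓ · (g u + 1), then ℓ is deletable. -/

import Mathlib

/-- A Czech hat game on the digraph with adjacency `D` (sage `v` sees sage `u`
iff `D v u`), guessness `g`, and hatness `h`, is winnable: there is a strategy
assigning to each sage `v` a set of `g v` guesses, depending only on the hats
she sees, such that for every coloring some sage guesses her own hat color. -/
def HatGame.Winnable {V : Type*} (D : V → V → Prop) (g h : V → ℕ) : Prop :=
  ∃ F : ∀ v : V, (∀ u : V, Fin (h u)) → Finset (Fin (h v)),
    (∀ (v : V) (c c' : ∀ u : V, Fin (h u)),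
        (∀ u : V, D v u → c u = c' u) → F v c = F v c') ∧
    (∀ (v : V) (c : ∀ u : V, Fin (h u)), (F v c).card = g v) ∧
    (∀ c : ∀ u : V, Fin (h u), ∃ v : V, c v ∈ F v c)

open Finset

/-!
Let `F` be a winning strategy. Since `ℓ` sees only `u`, its guesses are a function `A x` of the hat
`x` of `u`; the guesses of `u` are a function `B y` of the hat `y` of `ℓ` (the other hats being
fixed). Call `x` covered if for every `y` either `y ∈ A x` or `x ∈ B y`. Double counting the pairs
`(x, y)` with `x ∈ B y` shows that there are at most `g u` covered colours as soon as
`h ℓ > g ℓ * (g u + 1)`. In the game without `ℓ`, let `u` guess the covered colours (padded to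
`g u` guesses) and every other sage play `F` as if `ℓ` wore a fixed hat, which those sages do not
see anyway. If `u` is wrong, its hat `x` is not covered, so some `y` makes both `ℓ` and `u` wrong
under `F`; the sage who is right for that hat of `ℓ` is then right in the smaller game too.
-/

theorem Finset.card_filter_forall_mem_or_mem_le {α β : Type*} [Fintype α] [Fintype β] {a b : ℕ}
    (A : α → Finset β) (B : β → Finset α) [DecidablePred fun x => ∀ y, y ∈ A x ∨ x ∈ B y]
    (hA : ∀ x, #(A x) ≤ a) (hB : ∀ y, #(B y) ≤ b) (hab : a * (b + 1) < Fintype.card β) :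
    #{x | ∀ y, y ∈ A x ∨ x ∈ B y} ≤ b := by
  classical
  set S : Finset α := {x | ∀ y, y ∈ A x ∨ x ∈ B y}
  have hcount : #S * (Fintype.card β - a) ≤ Fintype.card β * b := by
    refine card_mul_le_card_mul (t := univ) (fun x y => x ∈ B y) (fun x hx => ?_) fun y _ => ?_
    · have hcover : (A x)ᶜ ⊆ univ.bipartiteAbove (fun x y => x ∈ B y) x := fun y hy =>
        mem_filter.2 ⟨mem_univ y, ((mem_filter.1 hx).2 y).resolve_left (mem_compl.1 hy)⟩
      calc Fintype.card β - a ≤ #(A x)ᶜ := by rw [card_compl]; have := hA x; omega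
        _ ≤ _ := card_le_card hcover
    · exact (card_le_card fun x hx => (mem_filter.1 hx).2).trans (hB y)
  by_contra! hS
  have ha : a ≤ Fintype.card β := (Nat.le_mul_of_pos_right a b.succ_pos).trans hab.le
  obtain ⟨t, ht⟩ : ∃ t, Fintype.card β = a + t := ⟨_, (Nat.add_sub_of_le ha).symm⟩
  rw [ht, Nat.add_sub_cancel_left] at hcount
  nlinarith [Nat.mul_le_mul_right t hS]

namespace HatGame

variable {V : Type*} {D : V → V → Prop} {g h : V → ℕ}

theorem Winnable.of_subtype {p : V → Prop} (hgh : ∀ v, g v ≤ h v)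
    (hwin : Winnable (fun a b : Subtype p => D a b) (fun a => g a) (fun a => h a)) :
    Winnable D g h := by
  classical
  obtain ⟨F, hloc, hcard, hwin⟩ := hwin
  choose s hs using fun v => exists_subset_card_eq (s := (univ : Finset (Fin (h v))))
    (by simpa using hgh v)
  refine ⟨fun v c => if hv : p v then F ⟨v, hv⟩ (fun b => c b) else s v, ?_, ?_, ?_⟩
  · intro v c c' hcc
    dsimp only
    split_ifs with hv
    · exact hloc ⟨v, hv⟩ _ _ fun b hb => hcc b hb
    · rfl
  · intro v c
    dsimp only
    split_ifs with hv
    · exact hcard _ _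
    · exact (hs v).2
  · intro c
    obtain ⟨a, ha⟩ := hwin fun b => c b
    exact ⟨a, by simpa [a.2] using ha⟩

def IsLocal (D : V → V → Prop) (F : ∀ v, (∀ w, Fin (h w)) → Finset (Fin (h v))) : Prop :=
  ∀ v c c', (∀ w, D v w → c w = c' w) → F v c = F v c'

theorem IsLocal.leaf_eq {F : ∀ v, (∀ w, Fin (h w)) → Finset (Fin (h v))} (hF : IsLocal D F)
    {ℓ u : V} (hout : ∀ w, D ℓ w → w = u) {c c' : ∀ w, Fin (h w)} (hc : c u = c' u) :
    F ℓ c = F ℓ c' :=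
  hF ℓ c c' fun w hw => hout w hw ▸ hc

variable [DecidableEq V] (ℓ : V)

def extend (c : ∀ b : {w // w ≠ ℓ}, Fin (h b)) (y : Fin (h ℓ)) : ∀ v, Fin (h v) :=
  (Equiv.piSplitAt ℓ fun v => Fin (h v)).symm (y, c)

@[simp]
theorem extend_self (c : ∀ b : {w // w ≠ ℓ}, Fin (h b)) (y : Fin (h ℓ)) : extend ℓ c y ℓ = y :=
  congrArg Prod.fst ((Equiv.piSplitAt ℓ fun v => Fin (h v)).apply_symm_apply (y, c))

theorem extend_of_ne (c : ∀ b : {w // w ≠ ℓ}, Fin (h b)) (y : Fin (h ℓ)) {v : V} (hv : v ≠ ℓ) :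
    extend ℓ c y v = c ⟨v, hv⟩ :=
  congrFun (congrArg Prod.snd ((Equiv.piSplitAt ℓ fun v => Fin (h v)).apply_symm_apply (y, c)))
    ⟨v, hv⟩

variable {ℓ} {F : ∀ v, (∀ w, Fin (h w)) → Finset (Fin (h v))}

theorem IsLocal.extend_congr (hF : IsLocal D F) {v : V} {c c' : ∀ b : {w // w ≠ ℓ}, Fin (h b)}
    {y y' : Fin (h ℓ)} (hcc : ∀ b : {w // w ≠ ℓ}, D v b → c b = c' b) (hy : D v ℓ → y = y') :
    F v (extend ℓ c y) = F v (extend ℓ c' y') := by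
  refine hF v _ _ fun w hw => ?_
  by_cases hwℓ : w = ℓ
  · subst hwℓ
    simpa using hy hw
  · rw [extend_of_ne ℓ c y hwℓ, extend_of_ne ℓ c' y' hwℓ]
    exact hcc ⟨w, hwℓ⟩ hw

variable (ℓ F) in
/-- The hats `x` of `u` that are covered: for every hat `y` of `ℓ`, either `ℓ` guesses `y` when `u`
wears `x`, or `u` guesses `x` when `ℓ` wears `y`. The hat `y₀` is a placeholder, irrelevant once
`ℓ` sees only `u`. -/
def coveredColors (u : V) (c : ∀ b : {w // w ≠ ℓ}, Fin (h b)) (y₀ : Fin (h ℓ)) :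
    Finset (Fin (h u)) :=
  {x | ∀ y, y ∈ F ℓ (Function.update (extend ℓ c y₀) u x) ∨ x ∈ F u (extend ℓ c y)}

theorem card_coveredColors_le {u : V} (hcard : ∀ v c, #(F v c) = g v)
    (hratio : g ℓ * (g u + 1) < h ℓ) (c : ∀ b : {w // w ≠ ℓ}, Fin (h b)) (y₀ : Fin (h ℓ)) :
    #(coveredColors ℓ F u c y₀) ≤ g u :=
  card_filter_forall_mem_or_mem_le (fun x => F ℓ (Function.update (extend ℓ c y₀) u x))
    (fun y => F u (extend ℓ c y)) (fun _ => (hcard ℓ _).le) (fun _ => (hcard u _).le)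
    (by simpa using hratio)

theorem IsLocal.coveredColors_congr (hF : IsLocal D F) {u : V} (hout : ∀ w, D ℓ w → w = u)
    {c c' : ∀ b : {w // w ≠ ℓ}, Fin (h b)} (hcc : ∀ b : {w // w ≠ ℓ}, D u b → c b = c' b)
    (y₀ : Fin (h ℓ)) : coveredColors ℓ F u c y₀ = coveredColors ℓ F u c' y₀ := by
  ext x
  have hleaf : F ℓ (Function.update (extend ℓ c y₀) u x) =
      F ℓ (Function.update (extend ℓ c' y₀) u x) :=
    hF.leaf_eq hout (by simp only [Function.update_self])
  simp only [coveredColors, mem_filter, mem_univ, true_and, hleaf,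
    hF.extend_congr hcc fun _ => rfl]

theorem IsLocal.exists_mem_of_notMem_coveredColors (hF : IsLocal D F) {u : V} (hℓu : ℓ ≠ u)
    (hout : ∀ w, D ℓ w → w = u) (hin : ∀ w, D w ℓ → w = u)
    (hwin : ∀ c : ∀ w, Fin (h w), ∃ v, c v ∈ F v c) (c : ∀ b : {w // w ≠ ℓ}, Fin (h b))
    (y₀ : Fin (h ℓ)) (hc : c ⟨u, hℓu.symm⟩ ∉ coveredColors ℓ F u c y₀) :
    ∃ v : {w // w ≠ ℓ}, (v : V) ≠ u ∧ c v ∈ F v (extend ℓ c y₀) := by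
  simp only [coveredColors, mem_filter, mem_univ, true_and, not_forall, not_or] at hc
  obtain ⟨y, hℓ, hu⟩ := hc
  rw [hF.leaf_eq hout (c' := extend ℓ c y) (by simp [extend_of_ne ℓ c _ hℓu.symm])] at hℓ
  obtain ⟨v, hv⟩ := hwin (extend ℓ c y)
  have hvℓ : v ≠ ℓ := by
    rintro rfl
    exact hℓ (by simpa using hv)
  have hvu : v ≠ u := by
    rintro rfl
    exact hu (by simpa [extend_of_ne ℓ c y hvℓ] using hv)
  refine ⟨⟨v, hvℓ⟩, hvu, ?_⟩
  rw [hF.extend_congr (y' := y) (fun _ _ => rfl) fun hvℓ' => absurd (hin v hvℓ') hvu,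
    ← extend_of_ne ℓ c y hvℓ]
  exact hv

theorem Winnable.subtype_ne_of_leaf {u : V} (hℓu : ℓ ≠ u) (hout : ∀ w, D ℓ w → w = u)
    (hin : ∀ w, D w ℓ → w = u) (hgu : g u ≤ h u) (hratio : g ℓ * (g u + 1) < h ℓ)
    (hwin : Winnable D g h) :
    Winnable (fun a b : {w // w ≠ ℓ} => D a b) (fun a => g a) (fun a => h a) := by
  obtain ⟨F, hF, hcard, hwin⟩ := hwin
  replace hF : IsLocal D F := hF
  let y₀ : Fin (h ℓ) := ⟨0, by omega⟩
  let uₗ : {w // w ≠ ℓ} := ⟨u, hℓu.symm⟩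
  choose T hT using fun s : {s : Finset (Fin (h u)) // #s ≤ g u} =>
    exists_superset_card_eq s.2 (by simpa using hgu)
  let covered c : {s : Finset (Fin (h u)) // #s ≤ g u} :=
    ⟨coveredColors ℓ F u c y₀, card_coveredColors_le hcard hratio c y₀⟩
  refine ⟨Function.update (fun a c => F a (extend ℓ c y₀)) uₗ fun c => T (covered c), ?_, ?_, ?_⟩
  · intro a c c' hcc
    rcases eq_or_ne a uₗ with rfl | ha
    · simp only [Function.update_self]
      exact congrArg T (Subtype.ext (hF.coveredColors_congr hout hcc y₀))
    · simp only [Function.update_of_ne ha]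
      exact hF.extend_congr hcc fun haℓ => absurd (Subtype.ext (hin a haℓ)) ha
  · intro a c
    rcases eq_or_ne a uₗ with rfl | ha
    · simpa only [Function.update_self] using (hT _).2
    · simpa only [Function.update_of_ne ha] using hcard _ _
  · intro c
    by_cases hc : c uₗ ∈ coveredColors ℓ F u c y₀
    · exact ⟨uₗ, by simpa only [Function.update_self] using (hT (covered c)).1 hc⟩
    · obtain ⟨v, hvu, hv⟩ := hF.exists_mem_of_notMem_coveredColors hℓu hout hin hwin c y₀ hc
      have hv' : v ≠ uₗ := fun e => hvu (congrArg Subtype.val e)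
      exact ⟨v, by simpa only [Function.update_of_ne hv'] using hv⟩

end HatGame

theorem czech_leaf_deletable_general {V : Type*}
    (D : V → V → Prop)
    (g h : V → ℕ) (hgh : ∀ v, 0 < g v ∧ g v < h v)
    (ℓ u : V) (hℓu : ℓ ≠ u)
    (hout : ∀ w : V, D ℓ w ↔ w = u)
    (hin : ∀ w : V, D w ℓ ↔ w = u)
    (hratio : h ℓ > g ℓ * (g u + 1)) :
    (HatGame.Winnable (fun a b : {w : V // w ≠ ℓ} => D a b)
        (fun a => g a) (fun a => h a) ↔
      HatGame.Winnable D g h) := by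
  classical
  have hle : ∀ v, g v ≤ h v := fun v => (hgh v).2.le
  exact ⟨HatGame.Winnable.of_subtype hle,
    HatGame.Winnable.subtype_ne_of_leaf hℓu (fun w => (hout w).1) (fun w => (hin w).1) (hle u)
      hratio⟩

/-- A leaf `ℓ` with neighbor `u` satisfying `h ℓ > g ℓ * (g u + 1)`
is deletable in any Czech game. -/
theorem czech_leaf_deletable {V : Type*} [Fintype V]
    (D : V → V → Prop) (hloop : ∀ v, ¬ D v v)
    (g h : V → ℕ) (hgh : ∀ v, 0 < g v ∧ g v < h v)
    (ℓ u : V) (hℓu : ℓ ≠ u)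
    (hout : ∀ w : V, D ℓ w ↔ w = u)
    (hin : ∀ w : V, D w ℓ ↔ w = u)
    (hratio : h ℓ > g ℓ * (g u + 1)) :
    (HatGame.Winnable (fun a b : {w : V // w ≠ ℓ} => D a b)
        (fun a => g a) (fun a => h a) ↔
      HatGame.Winnable D g h) :=
  czech_leaf_deletable_general D g h hgh ℓ u hℓu hout hin hratio
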